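/- If W is a P_5-witness structure of the graph G = G(Q,S) with W(p_1) = {v} and W(p_5) = {w}, then {u_1, u_2, q*} ⊆ W(p_2), {S_1,...,S_n} ⊆ W(p_3) and {S_1',...,S_n'} ⊆ W(p_4). -/

import Mathlib

/-- `W` is an `H`-witness structure of `G`: a family of pairwise disjoint nonempty
connected subsets of `V(G)` covering `V(G)` such that distinct `h₁ h₂` are adjacent in `H`
iff there is an edge of `G` between `W h₁` and `W h₂`. -/
def IsWitnessStructure {V U : Type*} (G : SimpleGraph V) (H : SimpleGraph U)
    (W : U → Set V) : Prop :=
  (∀ h, (W h).Nonempty) ∧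
  (∀ h₁ h₂, h₁ ≠ h₂ → Disjoint (W h₁) (W h₂)) ∧
  (⋃ h, W h) = Set.univ ∧
  (∀ h, (G.induce (W h)).Connected) ∧
  (∀ h₁ h₂, h₁ ≠ h₂ → ((∃ a ∈ W h₁, ∃ b ∈ W h₂, G.Adj a b) ↔ H.Adj h₁ h₂))

/-- `G` contains `H` as a contraction. -/
def ContainsAsContraction {V U : Type*} (G : SimpleGraph V) (H : SimpleGraph U) : Prop :=
  ∃ W : U → Set V, IsWitnessStructure G H W

/-- Raw vertex names for the graph `G(Q,S)`: elements `q_i`, hyperedges `S_j`,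
copies `S_j'`, subdivision vertices `q^i_j`, and special vertices `q*`, `u₁`, `u₂`, `v`, `w`. -/
inductive HVertex (m n : ℕ) : Type
  | elt : Fin m → HVertex m n
  | hyp : Fin n → HVertex m n
  | copy : Fin n → HVertex m n
  | sub : Fin m → Fin n → HVertex m n
  | qstar : HVertex m n
  | u1 : HVertex m n
  | u2 : HVertex m n
  | v : HVertex m n
  | w : HVertex m n

/-- A raw vertex name is an actual vertex of `G(Q,S)`: the subdivision vertex `q^i_j`
exists only when `q_i ∈ S_j`. -/
def HVertex.OK {m n : ℕ} (S : Fin n → Set (Fin m)) : HVertex m n → Prop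
  | .sub i j => i ∈ S j
  | _ => True

/-- The vertex set of `G(Q,S)`. -/
def GVertex {m n : ℕ} (S : Fin n → Set (Fin m)) : Type := {x : HVertex m n // x.OK S}

/-- The (asymmetrically listed) edges of `G(Q,S)`:
`q^i_j q_i`, `q^i_j S_j`, `q_i S_j'` (for `q_i ∈ S_j`), `S_j S_k'` (all `j,k`),
`q* u₁`, `q* u₂`, `q* q^i_j`, `u₁ S_j`, `u₂ S_j`, `u₁ v`, `u₂ v`, `w S_j'`. -/
def baseAdj {m n : ℕ} (S : Fin n → Set (Fin m)) : HVertex m n → HVertex m n → Prop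
  | .sub i _, .elt i' => i = i'
  | .sub _ j, .hyp j' => j = j'
  | .elt i, .copy j => i ∈ S j
  | .hyp _, .copy _ => True
  | .qstar, .u1 => True
  | .qstar, .u2 => True
  | .qstar, .sub _ _ => True
  | .u1, .hyp _ => True
  | .u2, .hyp _ => True
  | .u1, .v => True
  | .u2, .v => True
  | .w, .copy _ => True
  | _, _ => False

/-- The graph `G = G(Q,S)`. -/
def GQS {m n : ℕ} (S : Fin n → Set (Fin m)) : SimpleGraph (GVertex S) :=
  SimpleGraph.fromRel (fun a b => baseAdj S a.1 b.1)

/-!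
The end bags are `{v}` and `{w}`, so the neighbours `u₁, u₂` of `v` lie in `W(p₂)` and the
neighbours `S_j'` of `w` in `W(p₄)`. Each `S_j` is adjacent to both `u₁` and `S_j'`, which
forces it into `W(p₃)`. Finally `W(p₂)` is connected and contains `u₂`, so `u₁` has a
neighbour in `W(p₂)`; its neighbours are `v`, the `S_j` and `q*`, and only `q*` remains.
-/

namespace IsWitnessStructure

variable {V U : Type*} {G : SimpleGraph V} {H : SimpleGraph U} {W : U → Set V}

lemma exists_mem (hW : IsWitnessStructure G H W) (x : V) : ∃ h, x ∈ W h :=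
  Set.mem_iUnion.mp (hW.2.2.1 ▸ Set.mem_univ x)

lemma eq_of_mem (hW : IsWitnessStructure G H W) {x : V} {h₁ h₂ : U}
    (hx₁ : x ∈ W h₁) (hx₂ : x ∈ W h₂) : h₁ = h₂ := by
  by_contra hne
  exact Set.disjoint_left.mp (hW.2.1 h₁ h₂ hne) hx₁ hx₂

lemma eq_or_adj_of_adj (hW : IsWitnessStructure G H W) {a b : V} {h₁ h₂ : U}
    (ha : a ∈ W h₁) (hb : b ∈ W h₂) (hab : G.Adj a b) : h₁ = h₂ ∨ H.Adj h₁ h₂ :=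
  or_iff_not_imp_left.mpr fun hne => (hW.2.2.2.2 h₁ h₂ hne).mp ⟨a, ha, b, hb, hab⟩

lemma adj_of_adj_of_eq_singleton (hW : IsWitnessStructure G H W) {a b : V} {h₁ h₂ : U}
    (ha : W h₁ = {a}) (hb : b ∈ W h₂) (hba : b ≠ a) (hab : G.Adj b a) : H.Adj h₂ h₁ := by
  refine (hW.eq_or_adj_of_adj hb (ha ▸ rfl) hab).resolve_left ?_
  rintro rfl
  rw [ha] at hb
  exact hba hb

lemma mem_of_adj_of_eq_singleton (hW : IsWitnessStructure G H W) {a b : V} {h₁ h₂ : U}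
    (ha : W h₁ = {a}) (hH : ∀ h, H.Adj h h₁ → h = h₂) (hba : b ≠ a) (hab : G.Adj b a) :
    b ∈ W h₂ := by
  obtain ⟨h, hb⟩ := hW.exists_mem b
  rwa [← hH h (hW.adj_of_adj_of_eq_singleton ha hb hba hab)]

lemma exists_adj_mem (hW : IsWitnessStructure G H W) {x y : V} {h : U}
    (hx : x ∈ W h) (hy : y ∈ W h) (hxy : x ≠ y) : ∃ z ∈ W h, G.Adj x z := by
  have : Nontrivial (W h) := ⟨⟨⟨x, hx⟩, ⟨y, hy⟩, fun he => hxy congr($he.1)⟩⟩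
  obtain ⟨z, hz⟩ := (hW.2.2.2.1 h).preconnected.exists_adj_of_nontrivial ⟨x, hx⟩
  exact ⟨z, z.2, hz⟩

lemma dist_le_one_of_adj {n : ℕ} {W : Fin n → Set V}
    (hW : IsWitnessStructure G (SimpleGraph.pathGraph n) W) {a b : V} {k l : Fin n}
    (ha : a ∈ W k) (hb : b ∈ W l) (hab : G.Adj a b) : (k : ℕ) ≤ l + 1 ∧ (l : ℕ) ≤ k + 1 := by
  rcases hW.eq_or_adj_of_adj ha hb hab with rfl | hkl
  · omega
  · rw [SimpleGraph.pathGraph_adj] at hkl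
    omega

end IsWitnessStructure

section GQS

variable {m n : ℕ} {S : Fin n → Set (Fin m)}

lemma GVertex.mk_ne_mk {a b : HVertex m n} {ha : a.OK S} {hb : b.OK S} (h : a ≠ b) :
    (⟨a, ha⟩ : GVertex S) ≠ ⟨b, hb⟩ :=
  fun he => h congr($he.1)

lemma GQS_adj_of_baseAdj {a b : HVertex m n} {ha : a.OK S} {hb : b.OK S} (hne : a ≠ b)
    (h : baseAdj S a b) : (GQS S).Adj ⟨a, ha⟩ ⟨b, hb⟩ :=
  ⟨GVertex.mk_ne_mk hne, Or.inl h⟩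

lemma GQS_adj_u1_cases {x : GVertex S} (h : (GQS S).Adj ⟨.u1, trivial⟩ x) :
    x = ⟨.qstar, trivial⟩ ∨ (∃ j, x = ⟨.hyp j, trivial⟩) ∨ x = ⟨.v, trivial⟩ := by
  obtain ⟨x, hx⟩ := x
  obtain ⟨-, h | h⟩ := h <;> cases x <;> simp_all [baseAdj] <;> aesop

end GQS

theorem stmt_12 {m n : ℕ} (S : Fin n → Set (Fin m)) (W : Fin 5 → Set (GVertex S))
    (hW : IsWitnessStructure (GQS S) (SimpleGraph.pathGraph 5) W)
    (h1 : W 0 = {(⟨.v, trivial⟩ : GVertex S)})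
    (h5 : W 4 = {(⟨.w, trivial⟩ : GVertex S)}) :
    (⟨.u1, trivial⟩ : GVertex S) ∈ W 1 ∧
    (⟨.u2, trivial⟩ : GVertex S) ∈ W 1 ∧
    (⟨.qstar, trivial⟩ : GVertex S) ∈ W 1 ∧
    (∀ j : Fin n, (⟨.hyp j, trivial⟩ : GVertex S) ∈ W 2) ∧
    (∀ j : Fin n, (⟨.copy j, trivial⟩ : GVertex S) ∈ W 3) := by
  have hv : (⟨.v, trivial⟩ : GVertex S) ∈ W 0 := h1 ▸ rfl
  have nbr_0 (k : Fin 5) (hk : (SimpleGraph.pathGraph 5).Adj k 0) : k = 1 := by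
    rw [SimpleGraph.pathGraph_adj] at hk; omega
  have nbr_4 (k : Fin 5) (hk : (SimpleGraph.pathGraph 5).Adj k 4) : k = 3 := by
    rw [SimpleGraph.pathGraph_adj] at hk; omega
  have hu1 : (⟨.u1, trivial⟩ : GVertex S) ∈ W 1 :=
    hW.mem_of_adj_of_eq_singleton h1 nbr_0
      (GVertex.mk_ne_mk (by simp)) (GQS_adj_of_baseAdj (by simp) trivial)
  have hu2 : (⟨.u2, trivial⟩ : GVertex S) ∈ W 1 :=
    hW.mem_of_adj_of_eq_singleton h1 nbr_0
      (GVertex.mk_ne_mk (by simp)) (GQS_adj_of_baseAdj (by simp) trivial)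
  have hcopy (j : Fin n) : (⟨.copy j, trivial⟩ : GVertex S) ∈ W 3 :=
    hW.mem_of_adj_of_eq_singleton h5 nbr_4
      (GVertex.mk_ne_mk (by simp))
      (GQS_adj_of_baseAdj (a := .w) (b := .copy j) (by simp) trivial).symm
  have hhyp (j : Fin n) : (⟨.hyp j, trivial⟩ : GVertex S) ∈ W 2 := by
    obtain ⟨k, hk⟩ := hW.exists_mem ⟨.hyp j, trivial⟩
    have near_u1 := hW.dist_le_one_of_adj hu1 hk
      (by exact GQS_adj_of_baseAdj (by simp) trivial)
    have near_copy := hW.dist_le_one_of_adj hk (hcopy j)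
      (by exact GQS_adj_of_baseAdj (by simp) trivial)
    obtain rfl : k = 2 := by omega
    exact hk
  obtain ⟨z, hz, hu1z⟩ := hW.exists_adj_mem hu1 hu2 (GVertex.mk_ne_mk (by simp))
  rcases GQS_adj_u1_cases hu1z with rfl | ⟨j, rfl⟩ | rfl
  · exact ⟨hu1, hu2, hz, hhyp, hcopy⟩
  · exact absurd (hW.eq_of_mem hz (hhyp j)) (by decide)
  · exact absurd (hW.eq_of_mem hz hv) (by decide)
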